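/- Every planar binary tree with at least 2 internal vertices can be written either as x/y (grafting the root of x onto the leftmost leaf of y) for some planar binary trees x, y, or as ∘\(x) (grafting the root of x onto the rightmost leaf of the unique tree with one internal vertex) for some planar binary tree x. -/

import Mathlib

/-- Planar binary trees: a leaf `∘` or an ordered pair of planar binary trees. -/
inductive PBT : Type
  | leaf : PBT
  | node : PBT → PBT → PBT
deriving DecidableEq

namespace PBT

/-- The degree: the number of internal vertices. -/
def deg : PBT → ℕ
  | leaf => 0
  | node l r => deg l + deg r + 1

/-- The over product `x/y`: graft the root of `x` onto the leftmost leaf of `y`. -/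
def overProd (x : PBT) : PBT → PBT
  | leaf => x
  | node l r => node (overProd x l) r

/-- The under product `x\y`: graft the root of `y` onto the rightmost leaf of `x`. -/
def under : PBT → PBT → PBT
  | leaf, y => y
  | node l r, y => node l (under r y)

/-- Left-right reversal: swap the two subtrees at every internal vertex. -/
def rev : PBT → PBT
  | leaf => leaf
  | node l r => node (rev r) (rev l)

/-- `move x y` : `y` is obtained from `x` by one elementary Tamari move,
replacing a subtree `(a (b c))` by `((a b) c)` (a right rotation, going down). -/
inductive move : PBT → PBT → Prop
  | rot (a b c : PBT) : move (node a (node b c)) (node (node a b) c)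
  | left {a a' : PBT} (b : PBT) : move a a' → move (node a b) (node a' b)
  | right (a : PBT) {b b' : PBT} : move b b' → move (node a b) (node a b')

/-- The Tamari order: `x ≤ y` iff `x` is obtained from `y` by a sequence of
elementary moves. -/
def tle (x y : PBT) : Prop := Relation.ReflTransGen move y x

/-- The left comb of degree `n`. -/
def leftComb : ℕ → PBT
  | 0 => leaf
  | n+1 => node (leftComb n) leaf

/-- The right comb of degree `n`. -/
def rightComb : ℕ → PBT
  | 0 => leaf
  | n+1 => node leaf (rightComb n)

end PBT

namespace PBT

theorem overProd_node_leaf (x r : PBT) : x.overProd (node leaf r) = node x r := rfl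

theorem node_leaf_under (x : PBT) : (node leaf leaf).under x = node leaf x := rfl

end PBT

/-- Every planar binary tree with at least 2 internal vertices is either `x/y`
for some planar binary trees `x, y` (of positive degree), or `|\x` where `|`
is the unique tree with one internal vertex. -/
theorem stmt0 (t : PBT) (h : 2 ≤ t.deg) :
    (∃ x y : PBT, 1 ≤ x.deg ∧ 1 ≤ y.deg ∧ t = x.overProd y) ∨
    (∃ x : PBT, 1 ≤ x.deg ∧ t = (PBT.node .leaf .leaf).under x) := by
  rcases t with _ | ⟨_ | ⟨a, b⟩, r⟩
  · simp [PBT.deg] at h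
  · refine Or.inr ⟨r, ?_, (PBT.node_leaf_under r).symm⟩
    simp only [PBT.deg] at h
    omega
  · refine Or.inl ⟨.node a b, .node .leaf r, ?_, ?_, (PBT.overProd_node_leaf _ r).symm⟩ <;>
      simp [PBT.deg]
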